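/- arXiv:1506.00522 — 2 statements merged into one kernel-verified Lean document; each statement's English description precedes it below -/
import Mathlib

section
/- Let V be a nonempty finite set and A : V × V → ℝ a symmetric matrix with nonnegative entries whose every row sums to k, with k > 0 (the adjacency matrix of a finite k-regular multigraph). Suppose there is a real number c with 0 < c < k such that for every eigenvector of A that is orthogonal to the all-ones vector, the corresponding eigenvalue λ satisfies |λ| ≤ c. Then for every nonempty subset S ⊆ V, every vertex v ∈ V, and every natural number t ≥ ln(2·|V|/|S|^{1/2}) / ln(k/c), the probability that a random walk of length t starting at v ends in S satisfies |S|/(2|V|) ≤ k^{-t} · Σ_{w ∈ S} (A^t)_{v,w} ≤ 3|S|/(2|V|). -/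
open Finset RealInnerProductSpace

theorem step_bound
    {V : Type*} [Fintype V] [DecidableEq V]
    (A : Matrix V V ℝ) (c : ℝ) (hc0 : 0 ≤ c)
    (hsymm : A.IsSymm)
    (hgap : ∀ (lam : ℝ) (f : V → ℝ), f ≠ 0 → A.mulVec f = lam • f →
      (∑ x, f x) = 0 → |lam| ≤ c)
    (hker : ∀ g : V → ℝ, (∑ x, g x) = 0 → ∑ x, A.mulVec g x = 0)
    (g h : EuclideanSpace ℝ V) (hh : ∀ x, h x = A.mulVec g x)
    (hg : ∑ x, g x = 0) :
    ‖h‖ ≤ c * ‖g‖ := by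
  classical
  let L : EuclideanSpace ℝ V →ₗ[ℝ] ℝ :=
    { toFun := fun f => ∑ x, f x
      map_add' := by intro f h; exact Finset.sum_add_distrib
      map_smul' := by intro r f; simp [Finset.mul_sum] }
  let W : Submodule ℝ (EuclideanSpace ℝ V) := LinearMap.ker L
  let T : EuclideanSpace ℝ V →ₗ[ℝ] EuclideanSpace ℝ V :=
    { toFun := fun f => WithLp.toLp 2 (A.mulVec f)
      map_add' := by intro f h; ext x; simp [Matrix.mulVec_add]
      map_smul' := by intro r f; ext x; simp [Matrix.mulVec_smul] }
  have hTsym : T.IsSymmetric := by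
    intro x y
    simp only [T, LinearMap.coe_mk, AddHom.coe_mk, PiLp.inner_apply, RCLike.inner_apply,
      conj_trivial, PiLp.toLp_apply]
    simp only [Matrix.mulVec, dotProduct, Finset.sum_mul, Finset.mul_sum]
    rw [Finset.sum_comm]
    refine Finset.sum_congr rfl fun i _ => Finset.sum_congr rfl fun j _ => ?_
    rw [hsymm.apply i j]
    ring
  have hinv : ∀ x ∈ W, T x ∈ W := by
    intro x hx
    have : ∑ i, x i = 0 := hx
    exact hker x this
  let T' := T.restrict hinv
  have hT'sym : T'.IsSymmetric := by
    intro x y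
    have h1 : ⟪T' x, y⟫ = ⟪T (x : EuclideanSpace ℝ V), (y : EuclideanSpace ℝ V)⟫ := rfl
    have h2 : ⟪x, T' y⟫ = ⟪(x : EuclideanSpace ℝ V), T (y : EuclideanSpace ℝ V)⟫ := rfl
    rw [h1, h2, hTsym]
  have hgW : g ∈ W := hg
  set n : ℕ := Module.finrank ℝ W with hn
  let b := hT'sym.eigenvectorBasis (rfl : Module.finrank ℝ W = n)
  let μ := hT'sym.eigenvalues (rfl : Module.finrank ℝ W = n)
  have heig : ∀ i, T' (b i) = μ i • b i := fun i =>
    hT'sym.apply_eigenvectorBasis (rfl : Module.finrank ℝ W = n) i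
  have hμ : ∀ i, |μ i| ≤ c := by
    intro i
    refine hgap (μ i) ((b i : EuclideanSpace ℝ V) : V → ℝ) ?_ ?_ ?_
    · have : (b i : EuclideanSpace ℝ V) ≠ 0 := by
        simpa using b.toBasis.ne_zero i
      intro h0; apply this; ext x; simpa using congrFun h0 x
    · have := congrArg (fun z : W => ((z : EuclideanSpace ℝ V) : V → ℝ)) (heig i)
      simpa [T', T] using this
    · exact (b i).2
  set y : W := ⟨g, hgW⟩ with hy
  have hrepr : ∀ i, b.repr (T' y) i = μ i * b.repr y i := by
    intro i
    rw [b.repr_apply_apply, b.repr_apply_apply, ← hT'sym (b i) y, heig i]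
    exact real_inner_smul_left (b i) y (μ i)
  have hnorm : ‖T' y‖ ≤ c * ‖y‖ := by
    rw [← b.repr.norm_map (T' y), ← b.repr.norm_map y]
    rw [EuclideanSpace.norm_eq, EuclideanSpace.norm_eq]
    rw [show c = Real.sqrt (c ^ 2) from (Real.sqrt_sq hc0).symm]
    rw [← Real.sqrt_mul (by positivity)]
    apply Real.sqrt_le_sqrt
    rw [Finset.mul_sum]
    refine Finset.sum_le_sum fun i _ => ?_
    rw [hrepr i]
    simp only [Real.norm_eq_abs, sq_abs]
    rw [mul_pow]
    have : (μ i) ^ 2 ≤ c ^ 2 := by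
      have := hμ i
      nlinarith [abs_nonneg (μ i), sq_abs (μ i)]
    nlinarith [sq_nonneg (b.repr y i)]
  have hcoe1 : h = ((T' y : W) : EuclideanSpace ℝ V) := by ext x; exact hh x
  have hcoe2 : ‖y‖ = ‖g‖ := by rw [Submodule.coe_norm]
  rw [hcoe1, Submodule.norm_coe, ← hcoe2]
  exact hnorm

set_option maxHeartbeats 1000000 in
/-- **Rapid mixing of random walks on expander multigraphs.**
Let `V` be a nonempty finite set and `A` the adjacency matrix of a `k`-regular
multigraph on `V` (symmetric, nonnegative entries, row sums `k > 0`).  If every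
eigenvalue of `A` attached to an eigenvector orthogonal to the all-ones vector
is at most `c` in absolute value, with `0 < c < k`, then any random walk of
length `t ≥ ln(2|V|/|S|^{1/2}) / ln(k/c)` starting at a vertex `v` ends in a
nonempty subset `S` with probability between `|S|/(2|V|)` and `3|S|/(2|V|)`.
The probability of ending at `w` after `t` steps is `k⁻ᵗ (Aᵗ)_{v,w}`. -/
theorem rapid_mixing_expander
    {V : Type*} [Fintype V] [Nonempty V] [DecidableEq V]
    (A : Matrix V V ℝ) (k : ℝ) (hk : 0 < k)
    (hsymm : A.IsSymm)
    (hnonneg : ∀ v w, 0 ≤ A v w)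
    (hreg : ∀ v, ∑ w, A v w = k)
    (c : ℝ) (hc0 : 0 < c) (hck : c < k)
    (hgap : ∀ (lam : ℝ) (f : V → ℝ), f ≠ 0 → A.mulVec f = lam • f →
      (∑ x, f x) = 0 → |lam| ≤ c)
    (S : Finset V) (hS : S.Nonempty) (v : V) (t : ℕ)
    (ht : Real.log (2 * (Fintype.card V : ℝ) / Real.sqrt (S.card : ℝ)) /
            Real.log (k / c) ≤ (t : ℝ)) :
    (S.card : ℝ) / (2 * (Fintype.card V : ℝ))
        ≤ (k ^ t)⁻¹ * ∑ w ∈ S, (A ^ t) v w ∧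
    (k ^ t)⁻¹ * ∑ w ∈ S, (A ^ t) v w
        ≤ 3 * (S.card : ℝ) / (2 * (Fintype.card V : ℝ)) := by
  classical
  set n : ℝ := (Fintype.card V : ℝ) with hn
  set s : ℝ := (S.card : ℝ) with hs
  have hn0 : 0 < n := by
    rw [hn]; exact_mod_cast Fintype.card_pos
  have hs0 : 0 < s := by
    rw [hs]; exact_mod_cast (Finset.card_pos.mpr hS)
  have hsn : s ≤ n := by
    rw [hs, hn]; exact_mod_cast Finset.card_le_univ S
  have hkt : (0:ℝ) < k ^ t := pow_pos hk t
  -- column sums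
  have hcol : ∀ w, ∑ x, A x w = k := by
    intro w
    calc ∑ x, A x w = ∑ x, A w x := Finset.sum_congr rfl fun x _ => hsymm.apply w x
    _ = k := hreg w
  have hker : ∀ g : V → ℝ, (∑ x, g x) = 0 → ∑ x, A.mulVec g x = 0 := by
    intro g hg
    simp only [Matrix.mulVec, dotProduct]
    rw [Finset.sum_comm]
    calc ∑ y, ∑ x, A x y * g y = ∑ y, k * g y := by
          refine Finset.sum_congr rfl fun y _ => ?_
          rw [← Finset.sum_mul, hcol y]
    _ = k * ∑ y, g y := by rw [Finset.mul_sum]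
    _ = 0 := by rw [hg, mul_zero]
  -- vectors
  set one : EuclideanSpace ℝ V := WithLp.toLp 2 (fun _ => (1:ℝ)) with hone
  set chi : EuclideanSpace ℝ V := WithLp.toLp 2 (fun x => if x ∈ S then (1:ℝ) else 0) with hchi
  set g : EuclideanSpace ℝ V := WithLp.toLp 2 (fun x => chi x - s / n) with hgdef
  have hsum_chi : ∑ x, chi x = s := by
    rw [hchi]
    simp only [Finset.sum_ite_mem, Finset.univ_inter, Finset.sum_const, nsmul_eq_mul, mul_one]
    rw [hs]
  have hg : ∑ x, g x = 0 := by
    rw [hgdef]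
    simp only
    rw [Finset.sum_sub_distrib, hsum_chi, Finset.sum_const, Finset.card_univ, nsmul_eq_mul]
    rw [← hn]
    field_simp
    ring
  -- powers applied to one
  have honepow : ∀ m : ℕ, (A ^ m).mulVec one = fun _ => k ^ m := by
    intro m
    induction m with
    | zero => simp [Matrix.one_mulVec, hone]
    | succ m ih =>
      rw [pow_succ', ← Matrix.mulVec_mulVec, ih]
      funext x
      show ∑ y, A x y * k ^ m = k ^ (m+1)
      rw [← Finset.sum_mul, hreg x, pow_succ']
  -- powers applied to g
  set e : ℕ → EuclideanSpace ℝ V := fun m => WithLp.toLp 2 ((A ^ m).mulVec g) with he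
  have hesum : ∀ m, ∑ x, e m x = 0 := by
    intro m
    induction m with
    | zero => simpa [he, Matrix.one_mulVec] using hg
    | succ m ih =>
      have : e (m+1) = A.mulVec (e m) := by
        rw [he]; simp only
        rw [pow_succ', ← Matrix.mulVec_mulVec]
      rw [this]
      exact hker _ ih
  have henorm : ∀ m, ‖e m‖ ≤ c ^ m * ‖g‖ := by
    intro m
    induction m with
    | zero =>
      have : e 0 = g := by rw [he]; simp [Matrix.one_mulVec]
      rw [this]; simp
    | succ m ih =>
      have hstep : ‖e (m+1)‖ ≤ c * ‖e m‖ := by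
        refine step_bound A c hc0.le hsymm hgap hker (e m) (e (m+1)) ?_ (hesum m)
        intro x
        rw [he]; simp only
        rw [pow_succ', ← Matrix.mulVec_mulVec]
      calc ‖e (m+1)‖ ≤ c * ‖e m‖ := hstep
      _ ≤ c * (c ^ m * ‖g‖) := by
          exact mul_le_mul_of_nonneg_left ih hc0.le
      _ = c ^ (m+1) * ‖g‖ := by ring
  -- norm of g
  have hgnorm : ‖g‖ ≤ Real.sqrt s := by
    rw [EuclideanSpace.norm_eq]
    apply Real.sqrt_le_sqrt
    have expand : ∀ x : V, ‖g x‖ ^ 2 = chi x ^ 2 - 2 * (s/n) * chi x + (s/n)^2 := by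
      intro x
      rw [Real.norm_eq_abs, sq_abs, hgdef]
      ring
    rw [Finset.sum_congr rfl fun x _ => expand x]
    have hchisq : ∑ x, chi x ^ 2 = s := by
      have hsq1 : ∀ x : V, chi x ^ 2 = chi x := by
        intro x; rw [hchi]; by_cases h : x ∈ S <;> simp [h]
      rw [Finset.sum_congr rfl fun x _ => hsq1 x, hsum_chi]
    rw [Finset.sum_add_distrib, Finset.sum_sub_distrib, hchisq, ← Finset.mul_sum, hsum_chi,
      Finset.sum_const, Finset.card_univ, nsmul_eq_mul, ← hn]
    have hid : s - 2 * (s/n) * s + n * (s/n)^2 = s - s^2/n := by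
      field_simp
      ring
    rw [hid]
    have : 0 ≤ s^2/n := by positivity
    linarith
  -- coordinate bound
  have hcoord : |e t v| ≤ ‖e t‖ := by
    rw [EuclideanSpace.norm_eq, ← Real.sqrt_sq_eq_abs]
    apply Real.sqrt_le_sqrt
    have : (e t v)^2 = ‖e t v‖^2 := by rw [Real.norm_eq_abs, sq_abs]
    rw [this]
    exact Finset.single_le_sum (f := fun x => ‖e t x‖ ^ 2) (fun x _ => by positivity)
      (Finset.mem_univ v)
  -- decomposition of the sum
  have hdecomp : ∑ w ∈ S, (A ^ t) v w = e t v + (s/n) * k ^ t := by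
    have h1 : ∑ w ∈ S, (A ^ t) v w = (A ^ t).mulVec chi v := by
      show _ = ∑ w, (A ^ t) v w * chi w
      rw [hchi]
      simp only [mul_ite, mul_one, mul_zero, Finset.sum_ite_mem, Finset.univ_inter]
    have h2 : (chi : V → ℝ) = (g : V → ℝ) + (s/n) • (one : V → ℝ) := by
      funext x
      simp [hgdef, hone]
    rw [h1, h2, Matrix.mulVec_add, Matrix.mulVec_smul]
    have h3 : (A ^ t).mulVec one = fun _ => k ^ t := honepow t
    show e t v + ((s/n) • ((A ^ t).mulVec one)) v = _
    rw [h3]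
    simp [mul_comm]
  -- main error bound analytics
  have hkc1 : 1 < k / c := (one_lt_div hc0).2 hck
  have hlogpos : 0 < Real.log (k / c) := Real.log_pos hkc1
  have hratio : 2 * n / Real.sqrt s ≤ (k / c) ^ t := by
    have hpos : 0 < 2 * n / Real.sqrt s := by positivity
    have h1 : Real.log (2 * n / Real.sqrt s) ≤ t * Real.log (k / c) := by
      rw [div_le_iff₀ hlogpos] at ht
      linarith
    calc 2 * n / Real.sqrt s = Real.exp (Real.log (2 * n / Real.sqrt s)) :=
          (Real.exp_log hpos).symm
    _ ≤ Real.exp (t * Real.log (k / c)) := Real.exp_le_exp.2 h1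
    _ = Real.exp (Real.log (k / c)) ^ t := Real.exp_nat_mul _ t
    _ = (k / c) ^ t := by rw [Real.exp_log (by positivity)]
  have hsqrt_pos : 0 < Real.sqrt s := Real.sqrt_pos.2 hs0
  have hsq : Real.sqrt s * Real.sqrt s = s := Real.mul_self_sqrt hs0.le
  have hkey : c ^ t * Real.sqrt s ≤ k ^ t * (s / (2 * n)) := by
    have hct : (0:ℝ) < c ^ t := pow_pos hc0 t
    rw [div_pow, div_le_div_iff₀ (by positivity) hct] at hratio
    -- hratio : 2 * n * c ^ t ≤ k ^ t * Real.sqrt s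
    have h2 : 2 * n * c ^ t * Real.sqrt s ≤ k ^ t * s := by
      calc 2 * n * c ^ t * Real.sqrt s ≤ k ^ t * Real.sqrt s * Real.sqrt s := by
            nlinarith [hsqrt_pos]
      _ = k ^ t * s := by rw [mul_assoc, hsq]
    have h3 : k ^ t * (s / (2 * n)) = k ^ t * s / (2 * n) := by ring
    rw [h3, le_div_iff₀ (by positivity)]
    nlinarith [h2]
  -- conclude
  have herr : |e t v| ≤ k ^ t * (s / (2 * n)) := by
    calc |e t v| ≤ ‖e t‖ := hcoord
    _ ≤ c ^ t * ‖g‖ := henorm t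
    _ ≤ c ^ t * Real.sqrt s := by
        exact mul_le_mul_of_nonneg_left hgnorm (by positivity)
    _ ≤ k ^ t * (s / (2 * n)) := hkey
  have habs := abs_le.1 herr
  have hp : (k ^ t)⁻¹ * ∑ w ∈ S, (A ^ t) v w = (e t v) / k ^ t + s / n := by
    rw [hdecomp]
    field_simp
  have hid1 : s / n = 2 * (s / (2 * n)) := by
    field_simp
  constructor
  · rw [hp]
    have h1 : -(s / (2*n)) ≤ e t v / k ^ t := by
      rw [le_div_iff₀ hkt]
      nlinarith [habs.1]
    linarith
  · rw [hp]
    have h1 : e t v / k ^ t ≤ s / (2*n) := by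
      rw [div_le_iff₀ hkt]
      nlinarith [habs.2]
    have h2 : 3 * s / (2 * n) = s / n + s / (2 * n) := by
      rw [hid1]; ring
    rw [h2]
    linarith
end

section
/- Let K be a number field of degree n over ℚ, with ring of integers O_K, and let B ≥ 2 be a real number. Consider all nonzero ideals 𝔞 of O_K such that 𝔞 = 𝔩^m is a power (m ≥ 1) of a nonzero prime ideal 𝔩, the absolute norm N𝔞 is strictly less than B, and N𝔞 is not a prime number. Then the sum over such ideals 𝔞 = 𝔩^m of log N𝔩 is at most n · π(B^{1/2}) · log B, where π(x) is the number of primes at most x. (The key point is that for each rational prime ℓ there are at most n prime ideals of O_K above ℓ, and each such 𝔞 has norm a nontrivial prime power ℓ^k < B with k ≥ 2.) -/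
open NumberField

/-- The absolute norm of a nonzero prime ideal of the ring of integers is a prime power. -/
lemma absNorm_isPrimePow_aux (K : Type*) [Field K] [NumberField K]
    (𝔩 : Ideal (𝓞 K)) (hp : 𝔩.IsPrime) (hb : 𝔩 ≠ ⊥) :
    ∃ p f : ℕ, p.Prime ∧ 1 ≤ f ∧ Ideal.absNorm 𝔩 = p ^ f := by
  haveI : 𝔩.IsMaximal := hp.isMaximal hb
  haveI : Field (𝓞 K ⧸ 𝔩) := Ideal.Quotient.field 𝔩
  haveI hfin : Finite (𝓞 K ⧸ 𝔩) := by
    rw [← Ideal.absNorm_ne_zero_iff]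
    simpa [Ideal.absNorm_eq_zero_iff] using hb
  haveI : Fintype (𝓞 K ⧸ 𝔩) := Fintype.ofFinite _
  obtain ⟨p, -, f, hpp, hcard⟩ := FiniteField.card' (K := 𝓞 K ⧸ 𝔩)
  refine ⟨p, f, hpp, f.one_le, ?_⟩
  rw [Ideal.absNorm_apply, Submodule.cardQuot_apply, Nat.card_eq_fintype_card, hcard]

/-- There are at most `n = [K:ℚ]` prime ideals of `𝓞 K` containing a given rational prime. -/
lemma card_primes_over_le_aux (K : Type*) [Field K] [NumberField K]
    (p : ℕ) (hp : p.Prime) (P : Finset (Ideal (𝓞 K)))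
    (hP : ∀ 𝔩 ∈ P, 𝔩.IsPrime ∧ 𝔩 ≠ ⊥ ∧ (p : 𝓞 K) ∈ 𝔩) :
    P.card ≤ Module.finrank ℚ K := by
  classical
  set I : Ideal ℤ := Ideal.span {(p : ℤ)} with hI
  have hIprime : Prime (p : ℤ) := Nat.prime_iff_prime_int.mp hp
  haveI hImax : I.IsMaximal :=
    PrincipalIdealRing.isMaximal_of_irreducible hIprime.irreducible
  have hI0 : I ≠ ⊥ := by
    simp [hI, Ideal.span_singleton_eq_bot, hIprime.ne_zero, hp.ne_zero]
  have hmap : Ideal.map (algebraMap ℤ (𝓞 K)) I = Ideal.span {(p : 𝓞 K)} := by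
    rw [hI, Ideal.map_span, Set.image_singleton, map_natCast]
  have hmap0 : Ideal.map (algebraMap ℤ (𝓞 K)) I ≠ ⊥ := by
    rw [hmap]
    simp [Ideal.span_singleton_eq_bot, Nat.cast_ne_zero.mpr hp.ne_zero]
  set T := (UniqueFactorizationMonoid.factors (Ideal.map (algebraMap ℤ (𝓞 K)) I)).toFinset
    with hT
  have hsub : P ⊆ T := by
    intro 𝔩 h𝔩
    obtain ⟨h1, h2, h3⟩ := hP 𝔩 h𝔩
    rw [hT, Multiset.mem_toFinset, UniqueFactorizationMonoid.factors_eq_normalizedFactors,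
      Ideal.mem_normalizedFactors_iff hmap0]
    refine ⟨h1, ?_⟩
    rw [hmap, Ideal.span_singleton_le_iff_mem]
    exact h3
  have hsum := Ideal.sum_ramification_inertia (R := ℤ) (𝓞 K) ℚ K hI0
  calc P.card ≤ T.card := Finset.card_le_card hsub
    _ = T.card • 1 := by simp
    _ ≤ ∑ Q ∈ T, Ideal.ramificationIdx' I Q *
          Ideal.inertiaDeg' I Q := by
        apply Finset.card_nsmul_le_sum
        intro Q hQ
        have h1 := Ideal.Factors.ramificationIdx_ne_zero I (⟨Q, hQ⟩ : T)
        haveI := Ideal.Factors.liesOver I (⟨Q, hQ⟩ : T)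
        have h2 := Ideal.inertiaDeg'_pos I (⟨Q, hQ⟩ : T).1
        exact Nat.one_le_iff_ne_zero.mpr (Nat.mul_ne_zero h1 h2.ne')
    _ = Module.finrank ℚ K := hsum

/-- **Prime-power ideals of non-prime norm contribute `≤ n·π(√B)·log B`.**
Let `K` be a number field of degree `n` with ring of integers `O_K` and let
`B ≥ 2`.  Consider all ideals `𝔞 = 𝔩^m` of `O_K` that are powers (`m ≥ 1`) of
a nonzero prime ideal `𝔩`, with absolute norm `N𝔞 < B` and `N𝔞` not a prime
number.  (Such ideals correspond bijectively to the pairs `(𝔩, m)` below.)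
Then `∑ log N𝔩 ≤ n · π(B^{1/2}) · log B`, where `π` is the prime-counting
function.  The finitely supported sum `∑ᶠ` runs over the set of such pairs. -/
theorem prime_power_ideal_log_sum_le
    (K : Type*) [Field K] [NumberField K] (B : ℝ) (hB : 2 ≤ B) :
    ∑ᶠ p ∈ {p : Ideal (𝓞 K) × ℕ |
        p.1.IsPrime ∧ p.1 ≠ ⊥ ∧ 1 ≤ p.2 ∧
        (Ideal.absNorm (p.1 ^ p.2) : ℝ) < B ∧
        ¬ (Ideal.absNorm (p.1 ^ p.2)).Prime},
      Real.log (Ideal.absNorm p.1)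
    ≤ (Module.finrank ℚ K : ℝ) *
        (Nat.primeCounting ⌊Real.sqrt B⌋₊ : ℝ) * Real.log B := by
  classical
  have hBpos : (0 : ℝ) < B := lt_of_lt_of_le two_pos hB
  have hlogB : 0 ≤ Real.log B := Real.log_nonneg (le_trans one_le_two hB)
  set S : Set (Ideal (𝓞 K) × ℕ) := {p : Ideal (𝓞 K) × ℕ |
      p.1.IsPrime ∧ p.1 ≠ ⊥ ∧ 1 ≤ p.2 ∧
      (Ideal.absNorm (p.1 ^ p.2) : ℝ) < B ∧
      ¬ (Ideal.absNorm (p.1 ^ p.2)).Prime} with hSdef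
  -- basic facts about members of `S`
  have hnorm2 : ∀ q ∈ S, 2 ≤ Ideal.absNorm q.1 := by
    rintro ⟨𝔩, m⟩ ⟨h1, h2, h3, h4, h5⟩
    rcases Nat.lt_or_ge (Ideal.absNorm 𝔩) 2 with h | h
    · interval_cases h' : Ideal.absNorm 𝔩
      · exact absurd (Ideal.absNorm_eq_zero_iff.mp h') h2
      · exact absurd (Ideal.absNorm_eq_one_iff.mp h') h1.ne_top
    · exact h
  -- finiteness of `S`
  have hS : S.Finite := by
    apply Set.Finite.subset
      (Set.Finite.prod (Ideal.finite_setOf_absNorm_le (S := 𝓞 K) ⌊B⌋₊) (Set.finite_Iic ⌊B⌋₊))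
    rintro ⟨𝔩, m⟩ hmem
    obtain ⟨h1, h2, h3, h4, h5⟩ := hmem
    have h2' := hnorm2 ⟨𝔩, m⟩ ⟨h1, h2, h3, h4, h5⟩
    have hpow : Ideal.absNorm (𝔩 ^ m) = (Ideal.absNorm 𝔩) ^ m := map_pow _ _ _
    constructor
    · show Ideal.absNorm 𝔩 ≤ ⌊B⌋₊
      have : (Ideal.absNorm 𝔩 : ℝ) ≤ (Ideal.absNorm (𝔩 ^ m) : ℝ) := by
        rw [hpow]
        exact_mod_cast Nat.le_self_pow (by omega) _
      exact Nat.le_floor (le_of_lt (lt_of_le_of_lt this h4))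
    · show m ≤ ⌊B⌋₊
      have hm : m < 2 ^ m := m.lt_two_pow_self
      have h2m : 2 ^ m ≤ Ideal.absNorm (𝔩 ^ m) := by
        rw [hpow]; exact Nat.pow_le_pow_left h2' m
      have : (m : ℝ) < B := by
        calc (m : ℝ) < ((2 ^ m : ℕ) : ℝ) := by exact_mod_cast hm
          _ ≤ (Ideal.absNorm (𝔩 ^ m) : ℝ) := by exact_mod_cast h2m
          _ < B := h4
      exact Nat.le_floor this.le
  rw [finsum_mem_eq_finite_toFinset_sum _ hS]
  set T := hS.toFinset with hTdef
  have hTmem : ∀ q, q ∈ T ↔ q ∈ S := fun q => hS.mem_toFinset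
  set P := T.image Prod.fst with hPdef
  -- properties of prime ideals in `P`
  have hPfacts : ∀ 𝔩 ∈ P, 𝔩.IsPrime ∧ 𝔩 ≠ ⊥ ∧ 2 ≤ Ideal.absNorm 𝔩 := by
    intro 𝔩 h𝔩
    obtain ⟨q, hq, rfl⟩ := Finset.mem_image.mp h𝔩
    obtain ⟨h1, h2, -, -, -⟩ := (hTmem q).mp hq
    exact ⟨h1, h2, hnorm2 q ((hTmem q).mp hq)⟩
  -- fiberwise decomposition over the first coordinate
  have hfib : ∑ q ∈ T, Real.log (Ideal.absNorm q.1)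
      = ∑ 𝔩 ∈ P, ∑ q ∈ T.filter (fun q => q.1 = 𝔩), Real.log (Ideal.absNorm q.1) :=
    (Finset.sum_fiberwise_of_maps_to (fun q hq => Finset.mem_image_of_mem _ hq) _).symm
  rw [hfib]
  -- each inner sum is at most `log B`
  have hinner : ∀ 𝔩 ∈ P,
      ∑ q ∈ T.filter (fun q => q.1 = 𝔩), Real.log (Ideal.absNorm q.1) ≤ Real.log B := by
    intro 𝔩 h𝔩
    obtain ⟨hprime, hbot, h2⟩ := hPfacts 𝔩 h𝔩
    have hN1 : (1 : ℝ) < (Ideal.absNorm 𝔩 : ℝ) := by exact_mod_cast h2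
    have hlogN : 0 < Real.log (Ideal.absNorm 𝔩) := Real.log_pos hN1
    set M := ⌊Real.log B / Real.log (Ideal.absNorm 𝔩)⌋₊ with hM
    -- every second coordinate in the fiber lies in `Icc 1 M`
    have hsnd : ∀ q ∈ T.filter (fun q => q.1 = 𝔩), q.2 ∈ Finset.Icc 1 M := by
      intro q hq
      rw [Finset.mem_filter] at hq
      obtain ⟨hqT, hq1⟩ := hq
      obtain ⟨-, -, hm1, hlt, -⟩ := (hTmem q).mp hqT
      rw [hq1] at hlt
      have hpow : (Ideal.absNorm (𝔩 ^ q.2) : ℝ) = (Ideal.absNorm 𝔩 : ℝ) ^ q.2 := by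
        rw [map_pow]; push_cast; ring
      have hloglt : (q.2 : ℝ) * Real.log (Ideal.absNorm 𝔩) < Real.log B := by
        rw [← Real.log_pow]
        have h0 : (0 : ℝ) < (Ideal.absNorm 𝔩 : ℝ) ^ q.2 := by positivity
        calc Real.log ((Ideal.absNorm 𝔩 : ℝ) ^ q.2)
            = Real.log (Ideal.absNorm (𝔩 ^ q.2) : ℝ) := by rw [hpow]
          _ < Real.log B := Real.log_lt_log (by rw [hpow]; exact h0) hlt
      have : (q.2 : ℝ) ≤ Real.log B / Real.log (Ideal.absNorm 𝔩) :=
        (le_div_iff₀ hlogN).mpr hloglt.le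
      exact Finset.mem_Icc.mpr ⟨hm1, Nat.le_floor this⟩
    have hcard : (T.filter (fun q => q.1 = 𝔩)).card ≤ M := by
      calc (T.filter (fun q => q.1 = 𝔩)).card
          = ((T.filter (fun q => q.1 = 𝔩)).image Prod.snd).card := by
            rw [Finset.card_image_of_injOn]
            intro a ha b hb hab
            rw [Finset.mem_coe, Finset.mem_filter] at ha hb
            exact Prod.ext (ha.2.trans hb.2.symm) hab
        _ ≤ (Finset.Icc 1 M).card := Finset.card_le_card (by
            intro x hx
            obtain ⟨q, hq, rfl⟩ := Finset.mem_image.mp hx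
            exact hsnd q hq)
        _ ≤ M := by rw [Nat.card_Icc]; omega
    calc ∑ q ∈ T.filter (fun q => q.1 = 𝔩), Real.log (Ideal.absNorm q.1)
        = ∑ q ∈ T.filter (fun q => q.1 = 𝔩), Real.log (Ideal.absNorm 𝔩) := by
          apply Finset.sum_congr rfl
          intro q hq
          rw [(Finset.mem_filter.mp hq).2]
      _ = (T.filter (fun q => q.1 = 𝔩)).card * Real.log (Ideal.absNorm 𝔩) := by
          rw [Finset.sum_const, nsmul_eq_mul]
      _ ≤ (M : ℝ) * Real.log (Ideal.absNorm 𝔩) := by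
          apply mul_le_mul_of_nonneg_right _ hlogN.le
          exact_mod_cast hcard
      _ ≤ (Real.log B / Real.log (Ideal.absNorm 𝔩)) * Real.log (Ideal.absNorm 𝔩) := by
          apply mul_le_mul_of_nonneg_right _ hlogN.le
          exact Nat.floor_le (by positivity)
      _ = Real.log B := div_mul_cancel₀ _ hlogN.ne'
  -- bound the number of prime ideals in `P`
  set Q := (Finset.range (⌊Real.sqrt B⌋₊ + 1)).filter Nat.Prime with hQ
  have hQcard : Q.card = Nat.primeCounting ⌊Real.sqrt B⌋₊ := by
    rw [hQ, Nat.primeCounting, Nat.primeCounting', Nat.count_eq_card_filter_range]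
  have hPcard : P.card ≤ Module.finrank ℚ K * Q.card := by
    have key : ∀ a ∈ P.image (fun 𝔩 => (Ideal.absNorm 𝔩).minFac),
        (P.filter (fun 𝔩 => (Ideal.absNorm 𝔩).minFac = a)).card ≤ Module.finrank ℚ K := by
      intro a ha
      obtain ⟨𝔩₀, h𝔩₀, ha0⟩ := Finset.mem_image.mp ha
      obtain ⟨hprime0, hbot0, -⟩ := hPfacts 𝔩₀ h𝔩₀
      obtain ⟨p, f, hpp, hf, hNf⟩ := absNorm_isPrimePow_aux K 𝔩₀ hprime0 hbot0
      have hap : a = p := by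
        rw [← ha0, hNf, hpp.pow_minFac (by omega)]
      apply card_primes_over_le_aux K a (hap ▸ hpp)
      intro 𝔩 h𝔩
      rw [Finset.mem_filter] at h𝔩
      obtain ⟨h𝔩P, h𝔩a⟩ := h𝔩
      obtain ⟨hprime, hbot, -⟩ := hPfacts 𝔩 h𝔩P
      refine ⟨hprime, hbot, ?_⟩
      obtain ⟨p', f', hpp', hf', hNf'⟩ := absNorm_isPrimePow_aux K 𝔩 hprime hbot
      have hap' : a = p' := by rw [← h𝔩a, hNf', hpp'.pow_minFac (by omega)]
      have hmem : ((Ideal.absNorm 𝔩 : ℕ) : 𝓞 K) ∈ 𝔩 := Ideal.absNorm_mem 𝔩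
      rw [hNf'] at hmem
      have : ((p' : 𝓞 K)) ^ f' ∈ 𝔩 := by
        have : (((p' ^ f' : ℕ)) : 𝓞 K) = ((p' : 𝓞 K)) ^ f' := by push_cast; ring
        rwa [this] at hmem
      rw [hap']
      exact hprime.mem_of_pow_mem f' this
    have h1 : P.card ≤ Module.finrank ℚ K *
        (P.image (fun 𝔩 => (Ideal.absNorm 𝔩).minFac)).card :=
      Finset.card_le_mul_card_image P (Module.finrank ℚ K) key
    have h2 : (P.image (fun 𝔩 => (Ideal.absNorm 𝔩).minFac)) ⊆ Q := by
      intro a ha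
      obtain ⟨𝔩, h𝔩, ha0⟩ := Finset.mem_image.mp ha
      obtain ⟨hprime, hbot, -⟩ := hPfacts 𝔩 h𝔩
      obtain ⟨p, f, hpp, hf, hNf⟩ := absNorm_isPrimePow_aux K 𝔩 hprime hbot
      have hap : a = p := by rw [← ha0, hNf, hpp.pow_minFac (by omega)]
      -- from membership in P, get an exponent m
      obtain ⟨q, hq, hq1⟩ := Finset.mem_image.mp h𝔩
      obtain ⟨-, -, hm1, hlt, hnp⟩ := (hTmem q).mp hq
      rw [hq1] at hlt hnp
      have hpowN : Ideal.absNorm (𝔩 ^ q.2) = p ^ (f * q.2) := by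
        rw [map_pow, hNf, ← pow_mul]
      have hfm2 : 2 ≤ f * q.2 := by
        have hfm0 : f * q.2 ≠ 0 := Nat.mul_ne_zero (by omega) (by omega)
        have hfm1 : f * q.2 ≠ 1 := by
          intro h
          apply hnp
          rw [hpowN, h, pow_one]
          exact hpp
        omega
      have hsq : (p : ℝ) ^ 2 < B := by
        have : p ^ 2 ≤ Ideal.absNorm (𝔩 ^ q.2) := by
          rw [hpowN]
          exact Nat.pow_le_pow_right hpp.one_lt.le hfm2
        calc (p : ℝ) ^ 2 ≤ (Ideal.absNorm (𝔩 ^ q.2) : ℝ) := by exact_mod_cast this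
          _ < B := hlt
      have hple : (p : ℝ) ≤ Real.sqrt B := by
        rw [show ((p : ℝ)) = Real.sqrt ((p : ℝ) ^ 2) by
          rw [Real.sqrt_sq (by positivity)]]
        exact Real.sqrt_le_sqrt hsq.le
      rw [hQ, Finset.mem_filter, Finset.mem_range, hap]
      exact ⟨Nat.lt_succ_of_le (Nat.le_floor hple), hpp⟩
    calc P.card ≤ Module.finrank ℚ K *
          (P.image (fun 𝔩 => (Ideal.absNorm 𝔩).minFac)).card := h1
      _ ≤ Module.finrank ℚ K * Q.card :=
          Nat.mul_le_mul_left _ (Finset.card_le_card h2)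
  -- put everything together
  calc ∑ 𝔩 ∈ P, ∑ q ∈ T.filter (fun q => q.1 = 𝔩), Real.log (Ideal.absNorm q.1)
      ≤ ∑ 𝔩 ∈ P, Real.log B := Finset.sum_le_sum hinner
    _ = (P.card : ℝ) * Real.log B := by rw [Finset.sum_const, nsmul_eq_mul]
    _ ≤ ((Module.finrank ℚ K * Q.card : ℕ) : ℝ) * Real.log B := by
        apply mul_le_mul_of_nonneg_right _ hlogB
        exact_mod_cast hPcard
    _ = (Module.finrank ℚ K : ℝ) * (Nat.primeCounting ⌊Real.sqrt B⌋₊ : ℝ) * Real.log B := by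
        rw [← hQcard]; push_cast; ring
end
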